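/- arXiv:2403.15910 — 4 statements merged into one kernel-verified Lean document; each statement's English description precedes it below -/
import Mathlib

section
/- The UN-DID estimator without covariates equals the conventional DID estimator: running separate no-intercept regressions of Y on (pre, post) within the treated group and within the control group, the quantity (λ₂^T - λ₁^T) - (λ₂^C - λ₁^C) equals the OLS interaction coefficient β₃ from the pooled regression Y = β₀ + β₁ D + β₂ P + β₃ P·D + ε on the combined sample. -/
open scoped Classical

lemma quad_zero (A B : ℝ) (h : ∀ t : ℝ, B * t ≤ A * t ^ 2) : B = 0 := by
  by_contra hB
  have hB2 : 0 < B ^ 2 := by rcases lt_or_gt_of_ne hB with h'|h' <;> nlinarith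
  have hC : 0 < |A| + 1 := by positivity
  have hA : A ≤ |A| := le_abs_self A
  have h1 := h (B / (|A| + 1))
  rw [div_pow, ← mul_div_assoc, ← mul_div_assoc] at h1
  rw [div_le_div_iff₀ hC (by positivity)] at h1
  nlinarith [hB2, hC, hA, h1, mul_pos hB2 hC, mul_le_mul_of_nonneg_right hA (mul_pos hB2 hC).le]

lemma ortho {n : ℕ} (s : Finset (Fin n)) (f g : Fin n → ℝ)
    (h : ∀ t : ℝ, ∑ i ∈ s, (f i) ^ 2 ≤ ∑ i ∈ s, (f i - t * g i) ^ 2) :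
    ∑ i ∈ s, g i * f i = 0 := by
  have key : ∀ t : ℝ, (2 * ∑ i ∈ s, g i * f i) * t ≤ (∑ i ∈ s, (g i) ^ 2) * t ^ 2 := by
    intro t
    have h1 := h t
    have e2 : ∑ i ∈ s, (f i - t * g i) ^ 2
        = ∑ i ∈ s, ((f i) ^ 2 - (g i * f i) * (2 * t) + (g i) ^ 2 * t ^ 2) :=
      Finset.sum_congr rfl (fun i _ => by ring)
    rw [e2, Finset.sum_add_distrib, Finset.sum_sub_distrib, ← Finset.sum_mul,
      ← Finset.sum_mul] at h1
    nlinarith [h1]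
  have := quad_zero (∑ i ∈ s, (g i) ^ 2) (2 * ∑ i ∈ s, g i * f i) key
  linarith

lemma cell_const {n : ℕ} (s : Finset (Fin n)) (q : Fin n → Prop) [DecidablePred q]
    (f g Y : Fin n → ℝ) (c : ℝ)
    (hg : ∀ i ∈ s, g i = if q i then 1 else 0)
    (hf : ∀ i ∈ s.filter q, f i = Y i - c)
    (h : ∀ t : ℝ, ∑ i ∈ s, (f i) ^ 2 ≤ ∑ i ∈ s, (f i - t * g i) ^ 2) :
    ∑ i ∈ s.filter q, (Y i - c) = 0 := by
  have h0 := ortho s f g h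
  have h1 : ∑ i ∈ s, g i * f i = ∑ i ∈ s.filter q, f i := by
    rw [Finset.sum_filter]
    refine Finset.sum_congr rfl (fun i hi => ?_)
    rw [hg i hi]; split <;> simp
  rw [h1] at h0
  rw [← h0]
  exact Finset.sum_congr rfl (fun i hi => (hf i hi).symm)

lemma mean_eq {n : ℕ} (s : Finset (Fin n)) (hs : s.Nonempty) (Y : Fin n → ℝ) (c₁ c₂ : ℝ)
    (h₁ : ∑ i ∈ s, (Y i - c₁) = 0) (h₂ : ∑ i ∈ s, (Y i - c₂) = 0) : c₁ = c₂ := by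
  have h₃ : ∑ i ∈ s, (Y i - c₁) - ∑ i ∈ s, (Y i - c₂) = (s.card : ℝ) * (c₂ - c₁) := by
    rw [← Finset.sum_sub_distrib]
    rw [Finset.sum_congr rfl (fun i _ => (by ring : (Y i - c₁) - (Y i - c₂) = c₂ - c₁))]
    rw [Finset.sum_const, nsmul_eq_mul]
  rw [h₁, h₂] at h₃
  have hc : 0 < (s.card : ℝ) := by exact_mod_cast Finset.card_pos.mpr hs
  nlinarith [h₃, hc]

/-- UN-DID equals conventional DID without covariates: the difference of
within-group first differences from separate no-intercept regressions equals the pooled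
OLS interaction coefficient `β₃`. -/
theorem undid_eq_conventional_did (n : ℕ) (Y D P : Fin n → ℝ)
    (hD : ∀ i, D i = 0 ∨ D i = 1) (hP : ∀ i, P i = 0 ∨ P i = 1)
    (hcells : ∀ d p : ℝ, (d = 0 ∨ d = 1) → (p = 0 ∨ p = 1) →
      ∃ i, D i = d ∧ P i = p)
    (l₁T l₂T l₁C l₂C β₀ β₁ β₂ β₃ : ℝ)
    (hT : ∀ a b : ℝ,
      ∑ i ∈ Finset.univ.filter (fun i => D i = 1),
          (Y i - l₁T * (1 - P i) - l₂T * P i) ^ 2 ≤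
        ∑ i ∈ Finset.univ.filter (fun i => D i = 1),
          (Y i - a * (1 - P i) - b * P i) ^ 2)
    (hC : ∀ a b : ℝ,
      ∑ i ∈ Finset.univ.filter (fun i => D i = 0),
          (Y i - l₁C * (1 - P i) - l₂C * P i) ^ 2 ≤
        ∑ i ∈ Finset.univ.filter (fun i => D i = 0),
          (Y i - a * (1 - P i) - b * P i) ^ 2)
    (hpool : ∀ a b c e : ℝ,
      ∑ i, (Y i - β₀ - β₁ * D i - β₂ * P i - β₃ * (D i * P i)) ^ 2 ≤
        ∑ i, (Y i - a - b * D i - c * P i - e * (D i * P i)) ^ 2) :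
    (l₂T - l₁T) - (l₂C - l₁C) = β₃ := by
  classical
  -- nonempty cells
  have ne11 : (Finset.univ.filter (fun i => D i = 1 ∧ P i = 1)).Nonempty := by
    obtain ⟨i, hi⟩ := hcells 1 1 (Or.inr rfl) (Or.inr rfl)
    exact ⟨i, by simp [hi.1, hi.2]⟩
  have ne10 : (Finset.univ.filter (fun i => D i = 1 ∧ P i = 0)).Nonempty := by
    obtain ⟨i, hi⟩ := hcells 1 0 (Or.inr rfl) (Or.inl rfl)
    exact ⟨i, by simp [hi.1, hi.2]⟩
  have ne01 : (Finset.univ.filter (fun i => D i = 0 ∧ P i = 1)).Nonempty := by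
    obtain ⟨i, hi⟩ := hcells 0 1 (Or.inl rfl) (Or.inr rfl)
    exact ⟨i, by simp [hi.1, hi.2]⟩
  have ne00 : (Finset.univ.filter (fun i => D i = 0 ∧ P i = 0)).Nonempty := by
    obtain ⟨i, hi⟩ := hcells 0 0 (Or.inl rfl) (Or.inl rfl)
    exact ⟨i, by simp [hi.1, hi.2]⟩
  -- Group T, pre-period cell
  have hT10 : ∑ i ∈ Finset.univ.filter (fun i => D i = 1 ∧ P i = 0), (Y i - l₁T) = 0 := by
    have h := cell_const (Finset.univ.filter (fun i => D i = 1)) (fun i => P i = 0)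
      (fun i => Y i - l₁T * (1 - P i) - l₂T * P i) (fun i => 1 - P i) Y l₁T
      (fun i _ => by rcases hP i with h|h <;> norm_num [h])
      (fun i hi => by
        simp only [Finset.mem_filter] at hi
        simp only [hi.2]; ring)
      (fun t => le_trans (hT (l₁T + t) l₂T)
        (le_of_eq (Finset.sum_congr rfl fun i _ => by ring)))
    rw [Finset.filter_filter] at h
    convert h using 2
  -- Group T, post-period cell
  have hT11 : ∑ i ∈ Finset.univ.filter (fun i => D i = 1 ∧ P i = 1), (Y i - l₂T) = 0 := by
    have h := cell_const (Finset.univ.filter (fun i => D i = 1)) (fun i => P i = 1)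
      (fun i => Y i - l₁T * (1 - P i) - l₂T * P i) (fun i => P i) Y l₂T
      (fun i _ => by rcases hP i with h|h <;> norm_num [h])
      (fun i hi => by
        simp only [Finset.mem_filter] at hi
        simp only [hi.2]; ring)
      (fun t => le_trans (hT l₁T (l₂T + t))
        (le_of_eq (Finset.sum_congr rfl fun i _ => by ring)))
    rw [Finset.filter_filter] at h
    convert h using 2
  -- Group C, pre-period cell
  have hC10 : ∑ i ∈ Finset.univ.filter (fun i => D i = 0 ∧ P i = 0), (Y i - l₁C) = 0 := by
    have h := cell_const (Finset.univ.filter (fun i => D i = 0)) (fun i => P i = 0)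
      (fun i => Y i - l₁C * (1 - P i) - l₂C * P i) (fun i => 1 - P i) Y l₁C
      (fun i _ => by rcases hP i with h|h <;> norm_num [h])
      (fun i hi => by
        simp only [Finset.mem_filter] at hi
        simp only [hi.2]; ring)
      (fun t => le_trans (hC (l₁C + t) l₂C)
        (le_of_eq (Finset.sum_congr rfl fun i _ => by ring)))
    rw [Finset.filter_filter] at h
    convert h using 2
  -- Group C, post-period cell
  have hC11 : ∑ i ∈ Finset.univ.filter (fun i => D i = 0 ∧ P i = 1), (Y i - l₂C) = 0 := by
    have h := cell_const (Finset.univ.filter (fun i => D i = 0)) (fun i => P i = 1)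
      (fun i => Y i - l₁C * (1 - P i) - l₂C * P i) (fun i => P i) Y l₂C
      (fun i _ => by rcases hP i with h|h <;> norm_num [h])
      (fun i hi => by
        simp only [Finset.mem_filter] at hi
        simp only [hi.2]; ring)
      (fun t => le_trans (hC l₁C (l₂C + t))
        (le_of_eq (Finset.sum_congr rfl fun i _ => by ring)))
    rw [Finset.filter_filter] at h
    convert h using 2
  -- Pooled, cell (1,1)
  have hp11 : ∑ i ∈ Finset.univ.filter (fun i => D i = 1 ∧ P i = 1),
      (Y i - (β₀ + β₁ + β₂ + β₃)) = 0 := by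
    have h := cell_const Finset.univ (fun i => D i = 1 ∧ P i = 1)
      (fun i => Y i - β₀ - β₁ * D i - β₂ * P i - β₃ * (D i * P i))
      (fun i => D i * P i) Y (β₀ + β₁ + β₂ + β₃)
      (fun i _ => by rcases hD i with h|h <;> rcases hP i with h'|h' <;> norm_num [h, h'])
      (fun i hi => by
        simp only [Finset.mem_filter] at hi
        simp only [hi.2.1, hi.2.2]; ring)
      (fun t => le_trans (hpool β₀ β₁ β₂ (β₃ + t))
        (le_of_eq (Finset.sum_congr rfl fun i _ => by ring)))
    convert h using 2
  -- Pooled, cell (1,0)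
  have hp10 : ∑ i ∈ Finset.univ.filter (fun i => D i = 1 ∧ P i = 0),
      (Y i - (β₀ + β₁)) = 0 := by
    have h := cell_const Finset.univ (fun i => D i = 1 ∧ P i = 0)
      (fun i => Y i - β₀ - β₁ * D i - β₂ * P i - β₃ * (D i * P i))
      (fun i => D i * (1 - P i)) Y (β₀ + β₁)
      (fun i _ => by rcases hD i with h|h <;> rcases hP i with h'|h' <;> norm_num [h, h'])
      (fun i hi => by
        simp only [Finset.mem_filter] at hi
        simp only [hi.2.1, hi.2.2]; ring)
      (fun t => le_trans (hpool β₀ (β₁ + t) β₂ (β₃ - t))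
        (le_of_eq (Finset.sum_congr rfl fun i _ => by ring)))
    convert h using 2
  -- Pooled, cell (0,1)
  have hp01 : ∑ i ∈ Finset.univ.filter (fun i => D i = 0 ∧ P i = 1),
      (Y i - (β₀ + β₂)) = 0 := by
    have h := cell_const Finset.univ (fun i => D i = 0 ∧ P i = 1)
      (fun i => Y i - β₀ - β₁ * D i - β₂ * P i - β₃ * (D i * P i))
      (fun i => (1 - D i) * P i) Y (β₀ + β₂)
      (fun i _ => by rcases hD i with h|h <;> rcases hP i with h'|h' <;> norm_num [h, h'])
      (fun i hi => by
        simp only [Finset.mem_filter] at hi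
        simp only [hi.2.1, hi.2.2]; ring)
      (fun t => le_trans (hpool β₀ β₁ (β₂ + t) (β₃ - t))
        (le_of_eq (Finset.sum_congr rfl fun i _ => by ring)))
    convert h using 2
  -- Pooled, cell (0,0)
  have hp00 : ∑ i ∈ Finset.univ.filter (fun i => D i = 0 ∧ P i = 0),
      (Y i - β₀) = 0 := by
    have h := cell_const Finset.univ (fun i => D i = 0 ∧ P i = 0)
      (fun i => Y i - β₀ - β₁ * D i - β₂ * P i - β₃ * (D i * P i))
      (fun i => (1 - D i) * (1 - P i)) Y β₀
      (fun i _ => by rcases hD i with h|h <;> rcases hP i with h'|h' <;> norm_num [h, h'])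
      (fun i hi => by
        simp only [Finset.mem_filter] at hi
        simp only [hi.2.1, hi.2.2]; ring)
      (fun t => le_trans (hpool (β₀ + t) (β₁ - t) (β₂ - t) (β₃ + t))
        (le_of_eq (Finset.sum_congr rfl fun i _ => by ring)))
    convert h using 2
  have e1 := mean_eq _ ne11 Y _ _ hT11 hp11
  have e2 := mean_eq _ ne10 Y _ _ hT10 hp10
  have e3 := mean_eq _ ne01 Y _ _ hC11 hp01
  have e4 := mean_eq _ ne00 Y _ _ hC10 hp00
  linarith
end

section
/- Equivalence of UN-DID and the DID-INT (fully interacted) regression: the OLS coefficients from the pooled no-intercept regression Y = ψ₁ pre^T + ψ₂ post^T + ψ₃ pre^C + ψ₄ post^C + ψ₅ X^T + ψ₆ X^C + e satisfy (ψ₂ - ψ₁) - (ψ₄ - ψ₃) = (λ₂^T - λ₁^T) - (λ₂^C - λ₁^C), where (λ₁^j, λ₂^j, λ₃^j) are the OLS coefficients from the separate within-silo regressions Y^j = λ₁^j pre + λ₂^j post + λ₃^j X^j + ν^j run only on group j's observations, for j ∈ {T, C}. -/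
open scoped Classical

lemma uniq_min {ι : Type*} [Fintype ι] (Y f g h : ι → ℝ)
    (hli : LinearIndependent ℝ ![f, g, h])
    (a₁ a₂ a₃ b₁ b₂ b₃ : ℝ)
    (ha : ∀ c₁ c₂ c₃ : ℝ, ∑ i, (Y i - a₁ * f i - a₂ * g i - a₃ * h i) ^ 2 ≤
      ∑ i, (Y i - c₁ * f i - c₂ * g i - c₃ * h i) ^ 2)
    (hb : ∀ c₁ c₂ c₃ : ℝ, ∑ i, (Y i - b₁ * f i - b₂ * g i - b₃ * h i) ^ 2 ≤
      ∑ i, (Y i - c₁ * f i - c₂ * g i - c₃ * h i) ^ 2) :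
    a₁ = b₁ ∧ a₂ = b₂ ∧ a₃ = b₃ := by
  set r : ι → ℝ := fun i => Y i - a₁ * f i - a₂ * g i - a₃ * h i with hr
  set s : ι → ℝ := fun i => (b₁ - a₁) * f i + (b₂ - a₂) * g i + (b₃ - a₃) * h i with hs
  have e1 : ∑ i, (Y i - b₁ * f i - b₂ * g i - b₃ * h i) ^ 2 = ∑ i, (r i - s i) ^ 2 := by
    apply Finset.sum_congr rfl; intro i _; simp only [hr, hs]; ring
  have em : ∑ i, (Y i - (a₁ + (b₁ - a₁)/2) * f i - (a₂ + (b₂ - a₂)/2) * g i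
      - (a₃ + (b₃ - a₃)/2) * h i) ^ 2 = ∑ i, (r i - (1/2) * s i) ^ 2 := by
    apply Finset.sum_congr rfl; intro i _; simp only [hr, hs]; ring
  have h01 : ∑ i, r i ^ 2 = ∑ i, (r i - s i) ^ 2 := by
    have h1 := ha b₁ b₂ b₃
    have h2 := hb a₁ a₂ a₃
    rw [e1] at h1
    rw [show ∑ i, (Y i - a₁ * f i - a₂ * g i - a₃ * h i) ^ 2 = ∑ i, r i ^ 2 from rfl] at h1 h2
    rw [e1] at h2
    linarith
  have hmid : ∑ i, r i ^ 2 ≤ ∑ i, (r i - (1/2) * s i) ^ 2 := by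
    have := ha (a₁ + (b₁ - a₁)/2) (a₂ + (b₂ - a₂)/2) (a₃ + (b₃ - a₃)/2)
    rw [em] at this; exact this
  have hid : ∑ i, (r i - (1/2) * s i) ^ 2
      = (1/2) * ∑ i, r i ^ 2 + (1/2) * ∑ i, (r i - s i) ^ 2 - (1/4) * ∑ i, s i ^ 2 := by
    rw [Finset.mul_sum, Finset.mul_sum, Finset.mul_sum, ← Finset.sum_add_distrib,
      ← Finset.sum_sub_distrib]
    apply Finset.sum_congr rfl; intro i _; ring
  have hs2 : ∑ i, s i ^ 2 ≤ 0 := by linarith [hmid, hid, h01]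
  have hs0 : ∀ i, s i = 0 := by
    intro i
    have := (Finset.sum_eq_zero_iff_of_nonneg (fun j _ => sq_nonneg (s j))).mp
      (le_antisymm hs2 (Finset.sum_nonneg fun j _ => sq_nonneg (s j))) i (Finset.mem_univ i)
    exact pow_eq_zero_iff (n := 2) (by norm_num) |>.mp this
  have hz := Fintype.linearIndependent_iff.mp hli ![b₁ - a₁, b₂ - a₂, b₃ - a₃] (by
    funext i
    have := hs0 i
    simp only [hs] at this
    simp [Fin.sum_univ_three]
    linarith)
  refine ⟨?_, ?_, ?_⟩
  · have := hz 0; simp at this; linarith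
  · have := hz 1; simp at this; linarith
  · have := hz 2; simp at this; linarith

/-- Equivalence of UN-DID and the fully interacted DID-INT regression:
`(ψ₂ - ψ₁) - (ψ₄ - ψ₃) = (λ₂ᵀ - λ₁ᵀ) - (λ₂ᶜ - λ₁ᶜ)`. -/
theorem didint_eq_undid (n : ℕ) (Y D post X : Fin n → ℝ)
    (hD : ∀ i, D i = 0 ∨ D i = 1) (hpost : ∀ i, post i = 0 ∨ post i = 1)
    (hrank : LinearIndependent ℝ
      ![fun i => (1 - post i) * D i, fun i => post i * D i,
        fun i => (1 - post i) * (1 - D i), fun i => post i * (1 - D i),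
        fun i => X i * D i, fun i => X i * (1 - D i)])
    (hrankT : LinearIndependent ℝ
      ![fun j : {i : Fin n // D i = 1} => 1 - post j.1,
        fun j : {i : Fin n // D i = 1} => post j.1,
        fun j : {i : Fin n // D i = 1} => X j.1])
    (hrankC : LinearIndependent ℝ
      ![fun j : {i : Fin n // D i = 0} => 1 - post j.1,
        fun j : {i : Fin n // D i = 0} => post j.1,
        fun j : {i : Fin n // D i = 0} => X j.1])
    (ψ₁ ψ₂ ψ₃ ψ₄ ψ₅ ψ₆ : ℝ)
    (hψ : ∀ a₁ a₂ a₃ a₄ a₅ a₆ : ℝ,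
      ∑ i, (Y i - ψ₁ * ((1 - post i) * D i) - ψ₂ * (post i * D i)
            - ψ₃ * ((1 - post i) * (1 - D i)) - ψ₄ * (post i * (1 - D i))
            - ψ₅ * (X i * D i) - ψ₆ * (X i * (1 - D i))) ^ 2 ≤
        ∑ i, (Y i - a₁ * ((1 - post i) * D i) - a₂ * (post i * D i)
            - a₃ * ((1 - post i) * (1 - D i)) - a₄ * (post i * (1 - D i))
            - a₅ * (X i * D i) - a₆ * (X i * (1 - D i))) ^ 2)
    (l₁T l₂T l₃T l₁C l₂C l₃C : ℝ)
    (hT : ∀ a b c : ℝ,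
      ∑ i ∈ Finset.univ.filter (fun i => D i = 1),
          (Y i - l₁T * (1 - post i) - l₂T * post i - l₃T * X i) ^ 2 ≤
        ∑ i ∈ Finset.univ.filter (fun i => D i = 1),
          (Y i - a * (1 - post i) - b * post i - c * X i) ^ 2)
    (hC : ∀ a b c : ℝ,
      ∑ i ∈ Finset.univ.filter (fun i => D i = 0),
          (Y i - l₁C * (1 - post i) - l₂C * post i - l₃C * X i) ^ 2 ≤
        ∑ i ∈ Finset.univ.filter (fun i => D i = 0),
          (Y i - a * (1 - post i) - b * post i - c * X i) ^ 2) :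
    (ψ₂ - ψ₁) - (ψ₄ - ψ₃) = (l₂T - l₁T) - (l₂C - l₁C) := by
  have hDsplit : ∀ (F : Fin n → ℝ), ∑ i, F i =
      (∑ i ∈ Finset.univ.filter (fun i => D i = 1), F i)
      + ∑ i ∈ Finset.univ.filter (fun i => D i = 0), F i := by
    intro F
    rw [← Finset.sum_filter_add_sum_filter_not Finset.univ (fun i => D i = 1)]
    congr 1
    apply Finset.sum_congr _ (fun _ _ => rfl)
    apply Finset.filter_congr
    intro i _
    rcases hD i with h' | h' <;> simp [h']
  have hsplit : ∀ a₁ a₂ a₃ a₄ a₅ a₆ : ℝ,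
      ∑ i, (Y i - a₁ * ((1 - post i) * D i) - a₂ * (post i * D i)
            - a₃ * ((1 - post i) * (1 - D i)) - a₄ * (post i * (1 - D i))
            - a₅ * (X i * D i) - a₆ * (X i * (1 - D i))) ^ 2
      = (∑ i ∈ Finset.univ.filter (fun i => D i = 1),
          (Y i - a₁ * (1 - post i) - a₂ * post i - a₅ * X i) ^ 2)
      + ∑ i ∈ Finset.univ.filter (fun i => D i = 0),
          (Y i - a₃ * (1 - post i) - a₄ * post i - a₆ * X i) ^ 2 := by
    intro a₁ a₂ a₃ a₄ a₅ a₆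
    rw [hDsplit]
    congr 1
    · apply Finset.sum_congr rfl; intro i hi
      simp only [Finset.mem_filter] at hi; rw [hi.2]; ring
    · apply Finset.sum_congr rfl; intro i hi
      simp only [Finset.mem_filter] at hi; rw [hi.2]; ring
  have hψT : ∀ a b c : ℝ,
      ∑ i ∈ Finset.univ.filter (fun i => D i = 1),
          (Y i - ψ₁ * (1 - post i) - ψ₂ * post i - ψ₅ * X i) ^ 2 ≤
      ∑ i ∈ Finset.univ.filter (fun i => D i = 1),
          (Y i - a * (1 - post i) - b * post i - c * X i) ^ 2 := by
    intro a b c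
    have := hψ a b ψ₃ ψ₄ c ψ₆
    rw [hsplit, hsplit] at this
    linarith
  have hψC : ∀ a b c : ℝ,
      ∑ i ∈ Finset.univ.filter (fun i => D i = 0),
          (Y i - ψ₃ * (1 - post i) - ψ₄ * post i - ψ₆ * X i) ^ 2 ≤
      ∑ i ∈ Finset.univ.filter (fun i => D i = 0),
          (Y i - a * (1 - post i) - b * post i - c * X i) ^ 2 := by
    intro a b c
    have := hψ ψ₁ ψ₂ a b ψ₅ c
    rw [hsplit, hsplit] at this
    linarith
  have convT : ∀ (F : Fin n → ℝ),
      ∑ i ∈ Finset.univ.filter (fun i => D i = 1), F i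
        = ∑ j : {i : Fin n // D i = 1}, F j.1 :=
    fun F => Finset.sum_subtype _ (by simp) F
  have convC : ∀ (F : Fin n → ℝ),
      ∑ i ∈ Finset.univ.filter (fun i => D i = 0), F i
        = ∑ j : {i : Fin n // D i = 0}, F j.1 :=
    fun F => Finset.sum_subtype _ (by simp) F
  have eqT := uniq_min (fun j : {i : Fin n // D i = 1} => Y j.1)
      (fun j => 1 - post j.1) (fun j => post j.1) (fun j => X j.1) hrankT
      ψ₁ ψ₂ ψ₅ l₁T l₂T l₃T
      (fun a b c => by
        have h1 := hψT a b c
        rw [convT, convT] at h1; exact h1)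
      (fun a b c => by
        have h1 := hT a b c
        rw [convT, convT] at h1; exact h1)
  have eqC := uniq_min (fun j : {i : Fin n // D i = 0} => Y j.1)
      (fun j => 1 - post j.1) (fun j => post j.1) (fun j => X j.1) hrankC
      ψ₃ ψ₄ ψ₆ l₁C l₂C l₃C
      (fun a b c => by
        have h1 := hψC a b c
        rw [convC, convC] at h1; exact h1)
      (fun a b c => by
        have h1 := hC a b c
        rw [convC, convC] at h1; exact h1)
  obtain ⟨e1, e2, -⟩ := eqT
  obtain ⟨e3, e4, -⟩ := eqC
  linarith
end

section
/- Weighted decomposition of the OLS interaction coefficient with a binary covariate: when X is binary, the pooled DID interaction coefficient β₃ (from regressing Y on constant, D, P, D·P, X) can be written as a convex combination β₃ = ω₁ β₃^{(1)} + ω₀ β₃^{(0)} with ω₁ + ω₀ = 1, ω₁, ω₀ ≥ 0, where β₃^{(x)} is the DID interaction coefficient from the same regression restricted to the subsample with X = x, and the weights are proportional to the subsample sums of squared FWL residuals of D·P. -/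
/-!
By Frisch–Waugh–Lovell, in a least-squares regression the coefficient `β` of a regressor `z`
satisfies `∑ y r = β ∑ r²`, where `r` is the residual of `z` on the remaining regressors: the
outcome residual is orthogonal to `r`, and `r` is orthogonal to every other regressor. Since `r`
is both the full-sample residual of `D·P` and, on each cell `X = x`, the within-cell residual,
splitting `∑ Y r` and `∑ r²` over the two cells gives
`β₃ ∑ r² = β₃^{(1)} ∑_{X=1} r² + β₃^{(0)} ∑_{X=0} r²`.
-/

open scoped Classical

open Finset

theorem sum_mul_eq_zero_of_forall_sum_sq_le {ι : Type*} {s : Finset ι} {u v : ι → ℝ}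
    (h : ∀ t : ℝ, ∑ i ∈ s, u i ^ 2 ≤ ∑ i ∈ s, (u i - t * v i) ^ 2) :
    ∑ i ∈ s, u i * v i = 0 := by
  have hquad : ∀ t : ℝ,
      0 ≤ (∑ i ∈ s, v i ^ 2) * (t * t) + (-2 * ∑ i ∈ s, u i * v i) * t + 0 := by
    intro t
    have hexpand : ∑ i ∈ s, (u i - t * v i) ^ 2 = ∑ i ∈ s, u i ^ 2
        + ((∑ i ∈ s, v i ^ 2) * (t * t) + (-2 * ∑ i ∈ s, u i * v i) * t) := by
      simp only [mul_sum, sum_mul, ← sum_add_distrib]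
      exact sum_congr rfl fun i _ => by ring
    linarith [h t]
  have := discrim_le_zero hquad
  rw [discrim] at this
  nlinarith [sq_nonneg (∑ i ∈ s, u i * v i)]

def IsLeastSquares {ι κ : Type*} [Fintype κ] (s : Finset ι) (x : κ → ι → ℝ) (y : ι → ℝ)
    (c : κ → ℝ) : Prop :=
  ∀ c' : κ → ℝ,
    ∑ i ∈ s, (y i - ∑ j, c j * x j i) ^ 2 ≤ ∑ i ∈ s, (y i - ∑ j, c' j * x j i) ^ 2

theorem IsLeastSquares.sum_resid_mul_eq_zero {ι κ : Type*} [Fintype κ] {s : Finset ι}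
    {x : κ → ι → ℝ} {y : ι → ℝ} {c : κ → ℝ} (h : IsLeastSquares s x y c)
    (d : κ → ℝ) :
    ∑ i ∈ s, (y i - ∑ j, c j * x j i) * ∑ j, d j * x j i = 0 := by
  refine sum_mul_eq_zero_of_forall_sum_sq_le fun t => (h (c + t • d)).trans_eq ?_
  refine sum_congr rfl fun i _ => ?_
  simp only [Pi.add_apply, Pi.smul_apply, smul_eq_mul, add_mul, sum_add_distrib, mul_sum]
  ring_nf

theorem IsLeastSquares.sum_mul_resid_eq {ι : Type*} {k : ℕ} {s : Finset ι}
    {x : Fin k → ι → ℝ} {y z r : ι → ℝ} {β : ℝ} {c a : Fin k → ℝ}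
    (hy : IsLeastSquares s (Fin.cons z x) y (Fin.cons β c)) (hz : IsLeastSquares s x z a)
    (hr : ∀ i ∈ s, r i = z i - ∑ j, a j * x j i) :
    ∑ i ∈ s, y i * r i = β * ∑ i ∈ s, r i ^ 2 := by
  -- the regressor combination with coefficients `Fin.cons 1 (-a)` is `z - ∑ a x`, i.e. `r`
  have hyr := hy.sum_resid_mul_eq_zero (Fin.cons 1 (-a))
  have hrc := hz.sum_resid_mul_eq_zero c
  have hra := hz.sum_resid_mul_eq_zero a
  simp only [Fin.sum_univ_succ, Fin.cons_zero, Fin.cons_succ, Pi.neg_apply, one_mul, neg_mul,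
    sum_neg_distrib, ← sub_eq_add_neg] at hyr
  rw [sum_congr rfl fun i hi => congrArg (y i * ·) (hr i hi),
    sum_congr rfl fun i hi => congrArg (· ^ 2) (hr i hi)]
  set e := fun i => z i - ∑ j, a j * x j i
  calc ∑ i ∈ s, y i * e i
      = ∑ i ∈ s, ((y i - (β * z i + ∑ j, c j * x j i)) * e i + e i * ∑ j, c j * x j i
          + β * e i ^ 2 + β * (e i * ∑ j, a j * x j i)) :=
        sum_congr rfl fun i _ => by ring
    _ = β * ∑ i ∈ s, e i ^ 2 := by
        rw [sum_add_distrib, sum_add_distrib, sum_add_distrib, hyr, hrc, ← mul_sum, ← mul_sum,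
          hra]
        ring

theorem sum_univ_eq_sum_filter_eq_one_add_sum_filter_eq_zero {ι : Type*} [Fintype ι]
    {X : ι → ℝ} (hX : ∀ i, X i = 0 ∨ X i = 1) (f : ι → ℝ) :
    ∑ i, f i = ∑ i ∈ univ.filter (fun i => X i = 1), f i
      + ∑ i ∈ univ.filter (fun i => X i = 0), f i := by
  rw [← sum_filter_add_sum_filter_not univ (fun i => X i = 1)]
  congr 2
  exact filter_congr fun i _ => by rcases hX i with h | h <;> simp [h]

theorem sum_mul_resid_eq_of_did_regression {ι : Type*} {s : Finset ι} {Y D P r : ι → ℝ}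
    {b₀ b₁ b₂ β d₀ d₁ d₂ : ℝ}
    (hb : ∀ a b c e : ℝ,
      ∑ i ∈ s, (Y i - b₀ - b₁ * D i - b₂ * P i - β * (D i * P i)) ^ 2 ≤
        ∑ i ∈ s, (Y i - a - b * D i - c * P i - e * (D i * P i)) ^ 2)
    (hd : ∀ x y z : ℝ,
      ∑ i ∈ s, (D i * P i - d₀ - d₁ * D i - d₂ * P i) ^ 2 ≤
        ∑ i ∈ s, (D i * P i - x - y * D i - z * P i) ^ 2)
    (hr : ∀ i ∈ s, r i = D i * P i - d₀ - d₁ * D i - d₂ * P i) :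
    ∑ i ∈ s, Y i * r i = β * ∑ i ∈ s, r i ^ 2 := by
  refine IsLeastSquares.sum_mul_resid_eq (x := ![1, D, P]) (z := fun i => D i * P i)
    (c := ![b₀, b₁, b₂]) (a := ![d₀, d₁, d₂]) (fun c' => ?_) (fun c' => ?_) (fun i hi => ?_)
  · convert hb (c' 1) (c' 2) (c' 3) (c' 0) using 3 <;> (simp [Fin.sum_univ_succ]; ring)
  · convert hd (c' 0) (c' 1) (c' 2) using 3 <;> (simp [Fin.sum_univ_succ]; ring)
  · simp [hr i hi, Fin.sum_univ_succ]; ring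

theorem did_coefficient_weighted_decomposition_general (n : ℕ) (Y D P X : Fin n → ℝ)
    (hX : ∀ i, X i = 0 ∨ X i = 1)
    -- full-sample regression of Y on (1, D, P, D·P, X)
    (β₀ β₁ β₂ β₃ β₄ : ℝ)
    (hβ : ∀ a b c e f : ℝ,
      ∑ i, (Y i - β₀ - β₁ * D i - β₂ * P i - β₃ * (D i * P i) - β₄ * X i) ^ 2 ≤
        ∑ i, (Y i - a - b * D i - c * P i - e * (D i * P i) - f * X i) ^ 2)
    -- FWL projection of D·P on (1, D, P, X) in the full sample and its residual r
    (a₀ a₁ a₂ a₃ : ℝ)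
    (hproj : ∀ x y z w : ℝ,
      ∑ i, (D i * P i - a₀ - a₁ * D i - a₂ * P i - a₃ * X i) ^ 2 ≤
        ∑ i, (D i * P i - x - y * D i - z * P i - w * X i) ^ 2)
    (r : Fin n → ℝ)
    (hr : ∀ i, r i = D i * P i - a₀ - a₁ * D i - a₂ * P i - a₃ * X i)
    (hr2 : ∑ i, r i ^ 2 ≠ 0)
    -- subsample regressions of Y on (1, D, P, D·P) for X = 1 and X = 0
    (b₀ b₁ b₂ β₃x1 : ℝ)
    (hb : ∀ a b c e : ℝ,
      ∑ i ∈ Finset.univ.filter (fun i => X i = 1),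
          (Y i - b₀ - b₁ * D i - b₂ * P i - β₃x1 * (D i * P i)) ^ 2 ≤
        ∑ i ∈ Finset.univ.filter (fun i => X i = 1),
          (Y i - a - b * D i - c * P i - e * (D i * P i)) ^ 2)
    (c₀ c₁ c₂ β₃x0 : ℝ)
    (hc : ∀ a b c e : ℝ,
      ∑ i ∈ Finset.univ.filter (fun i => X i = 0),
          (Y i - c₀ - c₁ * D i - c₂ * P i - β₃x0 * (D i * P i)) ^ 2 ≤
        ∑ i ∈ Finset.univ.filter (fun i => X i = 0),
          (Y i - a - b * D i - c * P i - e * (D i * P i)) ^ 2)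
    -- subsample FWL projections of D·P on (1, D, P), coinciding with r on each subsample
    (d₀ d₁ d₂ : ℝ)
    (hd : ∀ x y z : ℝ,
      ∑ i ∈ Finset.univ.filter (fun i => X i = 1),
          (D i * P i - d₀ - d₁ * D i - d₂ * P i) ^ 2 ≤
        ∑ i ∈ Finset.univ.filter (fun i => X i = 1),
          (D i * P i - x - y * D i - z * P i) ^ 2)
    (hrd : ∀ i, X i = 1 → r i = D i * P i - d₀ - d₁ * D i - d₂ * P i)
    (e₀ e₁ e₂ : ℝ)
    (he : ∀ x y z : ℝ,
      ∑ i ∈ Finset.univ.filter (fun i => X i = 0),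
          (D i * P i - e₀ - e₁ * D i - e₂ * P i) ^ 2 ≤
        ∑ i ∈ Finset.univ.filter (fun i => X i = 0),
          (D i * P i - x - y * D i - z * P i) ^ 2)
    (hre : ∀ i, X i = 0 → r i = D i * P i - e₀ - e₁ * D i - e₂ * P i) :
    (∑ i ∈ Finset.univ.filter (fun i => X i = 1), r i ^ 2) / (∑ i, r i ^ 2) +
      (∑ i ∈ Finset.univ.filter (fun i => X i = 0), r i ^ 2) / (∑ i, r i ^ 2) = 1 ∧
    0 ≤ (∑ i ∈ Finset.univ.filter (fun i => X i = 1), r i ^ 2) / (∑ i, r i ^ 2) ∧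
    0 ≤ (∑ i ∈ Finset.univ.filter (fun i => X i = 0), r i ^ 2) / (∑ i, r i ^ 2) ∧
    β₃ =
      ((∑ i ∈ Finset.univ.filter (fun i => X i = 1), r i ^ 2) / (∑ i, r i ^ 2)) * β₃x1 +
      ((∑ i ∈ Finset.univ.filter (fun i => X i = 0), r i ^ 2) / (∑ i, r i ^ 2)) * β₃x0 := by
  have hsplit := sum_univ_eq_sum_filter_eq_one_add_sum_filter_eq_zero hX
  have hfull : ∑ i, Y i * r i = β₃ * ∑ i, r i ^ 2 := by
    refine IsLeastSquares.sum_mul_resid_eq (x := ![1, D, P, X]) (z := fun i => D i * P i)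
      (c := ![β₀, β₁, β₂, β₄]) (a := ![a₀, a₁, a₂, a₃]) (fun c' => ?_) (fun c' => ?_)
      (fun i _ => ?_)
    · convert hβ (c' 1) (c' 2) (c' 3) (c' 0) (c' 4) using 3 <;> (simp [Fin.sum_univ_succ]; ring)
    · convert hproj (c' 0) (c' 1) (c' 2) (c' 3) using 3 <;> (simp [Fin.sum_univ_succ]; ring)
    · simp [hr i, Fin.sum_univ_succ]; ring
  have h₁ := sum_mul_resid_eq_of_did_regression hb hd fun i hi => hrd i (mem_filter.mp hi).2
  have h₀ := sum_mul_resid_eq_of_did_regression hc he fun i hi => hre i (mem_filter.mp hi).2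
  have hS₁ : 0 ≤ ∑ i ∈ univ.filter (fun i => X i = 1), r i ^ 2 :=
    sum_nonneg fun i _ => sq_nonneg _
  have hS₀ : 0 ≤ ∑ i ∈ univ.filter (fun i => X i = 0), r i ^ 2 :=
    sum_nonneg fun i _ => sq_nonneg _
  have hT : 0 ≤ ∑ i, r i ^ 2 := sum_nonneg fun i _ => sq_nonneg _
  refine ⟨by rw [← add_div, ← hsplit, div_self hr2], div_nonneg hS₁ hT, div_nonneg hS₀ hT, ?_⟩
  rw [div_mul_eq_mul_div, div_mul_eq_mul_div, ← add_div, eq_div_iff hr2, ← hfull, hsplit, h₁,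
    h₀]
  ring

/-- With a binary covariate `X`, the pooled DID interaction coefficient is
a convex combination of the subsample (`X = 1` and `X = 0`) DID interaction coefficients,
with weights proportional to the subsample sums of squared FWL residuals of `D·P`. -/
theorem did_coefficient_weighted_decomposition (n : ℕ) (Y D P X : Fin n → ℝ)
    (hD : ∀ i, D i = 0 ∨ D i = 1) (hP : ∀ i, P i = 0 ∨ P i = 1)
    (hX : ∀ i, X i = 0 ∨ X i = 1)
    -- full-sample regression of Y on (1, D, P, D·P, X)
    (β₀ β₁ β₂ β₃ β₄ : ℝ)
    (hβ : ∀ a b c e f : ℝ,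
      ∑ i, (Y i - β₀ - β₁ * D i - β₂ * P i - β₃ * (D i * P i) - β₄ * X i) ^ 2 ≤
        ∑ i, (Y i - a - b * D i - c * P i - e * (D i * P i) - f * X i) ^ 2)
    -- FWL projection of D·P on (1, D, P, X) in the full sample and its residual r
    (a₀ a₁ a₂ a₃ : ℝ)
    (hproj : ∀ x y z w : ℝ,
      ∑ i, (D i * P i - a₀ - a₁ * D i - a₂ * P i - a₃ * X i) ^ 2 ≤
        ∑ i, (D i * P i - x - y * D i - z * P i - w * X i) ^ 2)
    (r : Fin n → ℝ)
    (hr : ∀ i, r i = D i * P i - a₀ - a₁ * D i - a₂ * P i - a₃ * X i)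
    (hr2 : ∑ i, r i ^ 2 ≠ 0)
    -- subsample regressions of Y on (1, D, P, D·P) for X = 1 and X = 0
    (b₀ b₁ b₂ β₃x1 : ℝ)
    (hb : ∀ a b c e : ℝ,
      ∑ i ∈ Finset.univ.filter (fun i => X i = 1),
          (Y i - b₀ - b₁ * D i - b₂ * P i - β₃x1 * (D i * P i)) ^ 2 ≤
        ∑ i ∈ Finset.univ.filter (fun i => X i = 1),
          (Y i - a - b * D i - c * P i - e * (D i * P i)) ^ 2)
    (c₀ c₁ c₂ β₃x0 : ℝ)
    (hc : ∀ a b c e : ℝ,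
      ∑ i ∈ Finset.univ.filter (fun i => X i = 0),
          (Y i - c₀ - c₁ * D i - c₂ * P i - β₃x0 * (D i * P i)) ^ 2 ≤
        ∑ i ∈ Finset.univ.filter (fun i => X i = 0),
          (Y i - a - b * D i - c * P i - e * (D i * P i)) ^ 2)
    -- subsample FWL projections of D·P on (1, D, P), coinciding with r on each subsample
    (d₀ d₁ d₂ : ℝ)
    (hd : ∀ x y z : ℝ,
      ∑ i ∈ Finset.univ.filter (fun i => X i = 1),
          (D i * P i - d₀ - d₁ * D i - d₂ * P i) ^ 2 ≤
        ∑ i ∈ Finset.univ.filter (fun i => X i = 1),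
          (D i * P i - x - y * D i - z * P i) ^ 2)
    (hrd : ∀ i, X i = 1 → r i = D i * P i - d₀ - d₁ * D i - d₂ * P i)
    (e₀ e₁ e₂ : ℝ)
    (he : ∀ x y z : ℝ,
      ∑ i ∈ Finset.univ.filter (fun i => X i = 0),
          (D i * P i - e₀ - e₁ * D i - e₂ * P i) ^ 2 ≤
        ∑ i ∈ Finset.univ.filter (fun i => X i = 0),
          (D i * P i - x - y * D i - z * P i) ^ 2)
    (hre : ∀ i, X i = 0 → r i = D i * P i - e₀ - e₁ * D i - e₂ * P i) :
    (∑ i ∈ Finset.univ.filter (fun i => X i = 1), r i ^ 2) / (∑ i, r i ^ 2) +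
      (∑ i ∈ Finset.univ.filter (fun i => X i = 0), r i ^ 2) / (∑ i, r i ^ 2) = 1 ∧
    0 ≤ (∑ i ∈ Finset.univ.filter (fun i => X i = 1), r i ^ 2) / (∑ i, r i ^ 2) ∧
    0 ≤ (∑ i ∈ Finset.univ.filter (fun i => X i = 0), r i ^ 2) / (∑ i, r i ^ 2) ∧
    β₃ =
      ((∑ i ∈ Finset.univ.filter (fun i => X i = 1), r i ^ 2) / (∑ i, r i ^ 2)) * β₃x1 +
      ((∑ i ∈ Finset.univ.filter (fun i => X i = 0), r i ^ 2) / (∑ i, r i ^ 2)) * β₃x0 :=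
  did_coefficient_weighted_decomposition_general n Y D P X hX β₀ β₁ β₂ β₃ β₄ hβ a₀ a₁ a₂ a₃ hproj r
    hr hr2 b₀ b₁ b₂ β₃x1 hb c₀ c₁ c₂ β₃x0 hc d₀ d₁ d₂ hd hrd e₀ e₁ e₂ he hre
end

section
/- Under no anticipation and conditional parallel trends, the four-term difference-in-differences of conditional expectations of observed outcomes identifies the conditional ATT: (E[Y|D=1,P=1,X=x] - E[Y|D=1,P=0,X=x]) - (E[Y|D=0,P=1,X=x] - E[Y|D=0,P=0,X=x]) = E[Y(1) - Y(0) | D=1, P=1, X=x]. -/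
open MeasureTheory

/-- Expectation of `f` conditional on the event `s`. -/
noncomputable def condMean {Ω : Type*} [MeasurableSpace Ω] (μ : Measure Ω)
    (f : Ω → ℝ) (s : Set Ω) : ℝ :=
  (∫ ω in s, f ω ∂μ) / (μ s).toReal

lemma condMean_congr {Ω : Type*} [MeasurableSpace Ω] (μ : Measure Ω)
    {f g : Ω → ℝ} {s : Set Ω} (hs : MeasurableSet s) (h : ∀ ω ∈ s, f ω = g ω) :
    condMean μ f s = condMean μ g s := by
  unfold condMean
  rw [setIntegral_congr_fun hs h]

lemma condMean_sub {Ω : Type*} [MeasurableSpace Ω] (μ : Measure Ω)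
    {f g : Ω → ℝ} (s : Set Ω) (hf : Integrable f μ) (hg : Integrable g μ) :
    condMean μ (fun ω => f ω - g ω) s = condMean μ f s - condMean μ g s := by
  unfold condMean
  rw [integral_sub hf.integrableOn hg.integrableOn, sub_div]

/-- Under no anticipation and conditional parallel trends, the
difference-in-differences of conditional means of observed outcomes identifies the
conditional ATT for the treated in the post period. -/
theorem did_identifies_conditional_att {Ω : Type*} [MeasurableSpace Ω] (μ : Measure Ω)
    [IsProbabilityMeasure μ]
    (Y Y1 Y0 : Ω → ℝ) (D P X : Ω → ℝ) (x : ℝ)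
    (hD : Measurable D) (hP : Measurable P) (hX : Measurable X)
    (hY : Integrable Y μ) (hY1 : Integrable Y1 μ) (hY0 : Integrable Y0 μ)
    -- observation rule (treated units reveal Y1 only in the post period; no anticipation)
    (hobs : ∀ ω, Y ω = if D ω = 1 ∧ P ω = 1 then Y1 ω else Y0 ω)
    -- conditioning events have positive probability
    (h11 : 0 < μ {ω | D ω = 1 ∧ P ω = 1 ∧ X ω = x})
    (h10 : 0 < μ {ω | D ω = 1 ∧ P ω = 0 ∧ X ω = x})
    (h01 : 0 < μ {ω | D ω = 0 ∧ P ω = 1 ∧ X ω = x})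
    (h00 : 0 < μ {ω | D ω = 0 ∧ P ω = 0 ∧ X ω = x})
    -- conditional parallel trends for untreated potential outcomes
    (hpt : condMean μ Y0 {ω | D ω = 1 ∧ P ω = 1 ∧ X ω = x} -
          condMean μ Y0 {ω | D ω = 1 ∧ P ω = 0 ∧ X ω = x} =
        condMean μ Y0 {ω | D ω = 0 ∧ P ω = 1 ∧ X ω = x} -
          condMean μ Y0 {ω | D ω = 0 ∧ P ω = 0 ∧ X ω = x}) :
    (condMean μ Y {ω | D ω = 1 ∧ P ω = 1 ∧ X ω = x} -
        condMean μ Y {ω | D ω = 1 ∧ P ω = 0 ∧ X ω = x}) -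
      (condMean μ Y {ω | D ω = 0 ∧ P ω = 1 ∧ X ω = x} -
        condMean μ Y {ω | D ω = 0 ∧ P ω = 0 ∧ X ω = x}) =
      condMean μ (fun ω => Y1 ω - Y0 ω) {ω | D ω = 1 ∧ P ω = 1 ∧ X ω = x} := by
  have mset : ∀ a b : ℝ, MeasurableSet {ω | D ω = a ∧ P ω = b ∧ X ω = x} := by
    intro a b
    exact (hD (measurableSet_singleton a)).inter
      ((hP (measurableSet_singleton b)).inter (hX (measurableSet_singleton x)))
  have e11 : condMean μ Y {ω | D ω = 1 ∧ P ω = 1 ∧ X ω = x} =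
      condMean μ Y1 {ω | D ω = 1 ∧ P ω = 1 ∧ X ω = x} := by
    refine condMean_congr μ (mset 1 1) fun ω hω => ?_
    rw [hobs ω, if_pos ⟨hω.1, hω.2.1⟩]
  have e10 : condMean μ Y {ω | D ω = 1 ∧ P ω = 0 ∧ X ω = x} =
      condMean μ Y0 {ω | D ω = 1 ∧ P ω = 0 ∧ X ω = x} := by
    refine condMean_congr μ (mset 1 0) fun ω hω => ?_
    rw [hobs ω, if_neg (by rintro ⟨_, h⟩; rw [hω.2.1] at h; norm_num at h)]
  have e01 : condMean μ Y {ω | D ω = 0 ∧ P ω = 1 ∧ X ω = x} =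
      condMean μ Y0 {ω | D ω = 0 ∧ P ω = 1 ∧ X ω = x} := by
    refine condMean_congr μ (mset 0 1) fun ω hω => ?_
    rw [hobs ω, if_neg (by rintro ⟨h, _⟩; rw [hω.1] at h; norm_num at h)]
  have e00 : condMean μ Y {ω | D ω = 0 ∧ P ω = 0 ∧ X ω = x} =
      condMean μ Y0 {ω | D ω = 0 ∧ P ω = 0 ∧ X ω = x} := by
    refine condMean_congr μ (mset 0 0) fun ω hω => ?_
    rw [hobs ω, if_neg (by rintro ⟨h, _⟩; rw [hω.1] at h; norm_num at h)]
  rw [e11, e10, e01, e00, condMean_sub μ _ hY1 hY0]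
  linarith
end
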